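/- (Admissibility of the margin-based heuristic.) Suppose each Lipschitz constant K c is strictly positive. Let x ∈ E be strictly classified as c, i.e., g(x,c) > 0. Then for every y ∈ E at which class c has been overtaken, i.e., g(y,c) ≤ 0 (there is some c' ≠ c with f c' y ≥ f c y), one has dist(x,y) ≥ g(x,c) / M(c). Thus the heuristic value g(x,c)/M(c) never overestimates the distance from x to a point with a changed classification. -/

import Mathlib

/-- The minimum confidence margin of class `c` at `x`:
`g(x,c) = min_{c' ≠ c} (f c x − f c' x)`. -/
noncomputable def margin {E : Type*} {C : Type*} [Fintype C] [DecidableEq C] [Nontrivial C]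
    (f : C → E → ℝ) (c : C) (x : E) : ℝ :=
  (Finset.univ.erase c).inf'
    (by obtain ⟨b, hb⟩ := exists_ne c
        exact ⟨b, Finset.mem_erase.2 ⟨hb, Finset.mem_univ b⟩⟩)
    (fun c' => f c x - f c' x)

/-- `M(c) = max_{c' ≠ c} (K c + K c')`. -/
noncomputable def Mconst {C : Type*} [Fintype C] [DecidableEq C] [Nontrivial C]
    (K : C → ℝ) (c : C) : ℝ :=
  (Finset.univ.erase c).sup'
    (by obtain ⟨b, hb⟩ := exists_ne c
        exact ⟨b, Finset.mem_erase.2 ⟨hb, Finset.mem_univ b⟩⟩)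
    (fun c' => K c + K c')

/-!
The margin `g(·,c)` is `M(c)`-Lipschitz: if `c'` realises the margin at `y`, then
`g(x,c) ≤ f c x - f c' x ≤ g(y,c) + (K c + K c') d(x,y)`.
Hence `g(y,c) ≤ 0 < g(x,c)` gives `0 < g(x,c) ≤ M(c) d(x,y)`, which in particular forces `M(c) > 0`.
-/
section Margin

variable {E C : Type*} [Fintype C] [DecidableEq C] [Nontrivial C]

lemma margin_le_sub {f : C → E → ℝ} {c c' : C} (hc' : c' ≠ c) (x : E) :
    margin f c x ≤ f c x - f c' x :=
  Finset.inf'_le _ (Finset.mem_erase.2 ⟨hc', Finset.mem_univ c'⟩)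

lemma exists_margin_eq_sub (f : C → E → ℝ) (c : C) (x : E) :
    ∃ c' ≠ c, margin f c x = f c x - f c' x := by
  obtain ⟨c', hc', h⟩ := Finset.exists_mem_eq_inf' _ (fun c' => f c x - f c' x)
  exact ⟨c', (Finset.mem_erase.1 hc').1, h⟩

lemma add_le_Mconst {K : C → ℝ} {c c' : C} (hc' : c' ≠ c) : K c + K c' ≤ Mconst K c :=
  Finset.le_sup' (fun c' => K c + K c') (Finset.mem_erase.2 ⟨hc', Finset.mem_univ c'⟩)

end Margin

lemma sub_le_sub_add_mul_dist {E C : Type*} [Dist E] {f : C → E → ℝ} {K : C → ℝ}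
    (hf : ∀ c x y, |f c x - f c y| ≤ K c * dist x y) (c c' : C) (x y : E) :
    f c x - f c' x ≤ f c y - f c' y + (K c + K c') * dist x y := by
  have hc := (abs_le.1 (hf c x y)).2
  have hc' := (abs_le.1 (hf c' x y)).1
  linarith

lemma margin_le_margin_add_Mconst_mul_dist {E C : Type*} [PseudoMetricSpace E] [Fintype C]
    [DecidableEq C] [Nontrivial C] {f : C → E → ℝ} {K : C → ℝ}
    (hf : ∀ c x y, |f c x - f c y| ≤ K c * dist x y) (c : C) (x y : E) :
    margin f c x ≤ margin f c y + Mconst K c * dist x y := by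
  obtain ⟨c', hc', hy⟩ := exists_margin_eq_sub f c y
  calc margin f c x ≤ f c x - f c' x := margin_le_sub hc' x
    _ ≤ f c y - f c' y + (K c + K c') * dist x y := sub_le_sub_add_mul_dist hf c c' x y
    _ ≤ margin f c y + Mconst K c * dist x y := by
      rw [hy]
      gcongr
      exact add_le_Mconst hc'

theorem heuristic_admissible_general
    {E : Type*} [MetricSpace E] {C : Type*} [Fintype C] [DecidableEq C] [Nontrivial C]
    (f : C → E → ℝ) (K : C → ℝ)
    (hf : ∀ c x y, |f c x - f c y| ≤ K c * dist x y)
    (c : C) (x : E) (hx : 0 < margin f c x) :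
    ∀ y : E, margin f c y ≤ 0 → margin f c x / Mconst K c ≤ dist x y := by
  intro y hy
  have hle : margin f c x ≤ Mconst K c * dist x y := by
    linarith [margin_le_margin_add_Mconst_mul_dist hf c x y]
  have hM : 0 < Mconst K c := pos_of_mul_pos_left (hx.trans_le hle) dist_nonneg
  rwa [div_le_iff₀ hM, mul_comm]

/-- **Admissibility of the margin-based heuristic.** If `x` is strictly classified
as `c` and class `c` has been overtaken at `y` (`g(y,c) ≤ 0`), then
`dist(x,y) ≥ g(x,c) / M(c)`: the heuristic never overestimates the distance to a
point with a changed classification. -/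
theorem heuristic_admissible
    {E : Type*} [MetricSpace E] {C : Type*} [Fintype C] [DecidableEq C] [Nontrivial C]
    (f : C → E → ℝ) (K : C → ℝ) (hK : ∀ c, 0 < K c)
    (hf : ∀ c x y, |f c x - f c y| ≤ K c * dist x y)
    (c : C) (x : E) (hx : 0 < margin f c x) :
    ∀ y : E, margin f c y ≤ 0 → margin f c x / Mconst K c ≤ dist x y :=
  heuristic_admissible_general f K hf c x hx
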